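/- arXiv:2202.10147 — 5 statements merged into one kernel-verified Lean document; each statement's English description precedes it below -/
import Mathlib

section
/- Let Δ = ⟨F₁,...,F_k⟩ be a simplicial complex on [n] with facets F₁,...,F_k. Then removing F_k is a shelling move (i.e., ⟨F_k⟩ ∩ ⟨F₁,...,F_{k-1}⟩ is pure of dimension dim(F_k) − 1) if and only if the colon ideal (x_{\bar{F_1}},...,x_{\bar{F_{k-1}}}) : x_{\bar{F_k}} is generated by variables. -/
open MvPolynomial

/-- The monomial `x^u` in the polynomial ring `K[x_i : i ∈ σ]`. -/
noncomputable def mon (K : Type) [Field K] {σ : Type} (u : σ →₀ ℕ) :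
    MvPolynomial σ K := MvPolynomial.monomial u 1

/-- Total degree of an exponent vector. -/
def mdeg {σ : Type} (u : σ →₀ ℕ) : ℕ := u.sum fun _ e => e

/-- The monomial ideal generated by the monomials with exponent vectors in `S`. -/
noncomputable def monIdeal (K : Type) [Field K] {σ : Type} (S : Set (σ →₀ ℕ)) :
    Ideal (MvPolynomial σ K) := Ideal.span ((mon K) '' S)

/-- An ideal is generated by variables. -/
def genByVars {K : Type} [Field K] {σ : Type} (J : Ideal (MvPolynomial σ K)) : Prop :=
  ∃ A : Set σ, J = Ideal.span ((fun i => (X i : MvPolynomial σ K)) '' A)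

/-- An ideal is generated by linear forms. -/
def genByLinForms {K : Type} [Field K] {σ : Type} (J : Ideal (MvPolynomial σ K)) : Prop :=
  ∃ S : Set (MvPolynomial σ K), (∀ f ∈ S, f.IsHomogeneous 1) ∧ J = Ideal.span S

/-- `S` is an antichain under divisibility of monomials, i.e. it is the minimal
monomial generating set `G(I)` of the monomial ideal `I` it generates. -/
def IsMinGenSet {σ : Type} (S : Set (σ →₀ ℕ)) : Prop :=
  ∀ u ∈ S, ∀ v ∈ S, u ≤ v → u = v

/-- A monomial ideal, presented by its minimal monomial generating set `S`, is
quasi-linear if for every `u ∈ S` the colon ideal `(G(I) \ {u}) : u` is generated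
by variables. -/
def QuasiLinear (K : Type) [Field K] {σ : Type} (S : Set (σ →₀ ℕ)) : Prop :=
  ∀ u ∈ S, genByVars (Submodule.colon (monIdeal K (S \ {u})) (Ideal.span {mon K u}))

/-- A minimal graded free resolution of an ideal `I` in a polynomial ring:
graded free modules `F i = ⊕_k R(-dg i k)` of rank `b i`, differentials
`F (i+1) → F i` given by the matrices `A i`, whose entries are homogeneous of the
appropriate degree and of positive degree (this is minimality, i.e. all entries lie
in the graded maximal ideal), together with an augmentation `F 0 → I` given by the
homogeneous generators `g`, everything being exact. -/
structure MinFreeRes {K : Type} [Field K] {σ : Type} (I : Ideal (MvPolynomial σ K)) where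
  b : ℕ → ℕ
  dg : (i : ℕ) → Fin (b i) → ℕ
  g : Fin (b 0) → MvPolynomial σ K
  A : (i : ℕ) → Matrix (Fin (b i)) (Fin (b (i+1))) (MvPolynomial σ K)
  g_hom : ∀ k, (g k).IsHomogeneous (dg 0 k)
  A_hom : ∀ i k l, A i k l = 0 ∨
    ((A i k l).IsHomogeneous (dg (i+1) l - dg i k) ∧ dg i k < dg (i+1) l)
  aug_range : LinearMap.range (Fintype.linearCombination (MvPolynomial σ K)
      g) = I
  aug_exact : LinearMap.ker (Fintype.linearCombination (MvPolynomial σ K)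
      g) = LinearMap.range ((A 0).mulVecLin)
  is_exact : ∀ i, LinearMap.ker ((A i).mulVecLin) = LinearMap.range ((A (i+1)).mulVecLin)

/-- The graded Betti number `β_{i,j}` read off from a minimal graded free resolution:
the number of generators of the `i`-th free module of degree `j`. -/
noncomputable def MinFreeRes.beta {K : Type} [Field K] {σ : Type}
    {I : Ideal (MvPolynomial σ K)} (res : MinFreeRes I) (i j : ℕ) : ℕ :=
  (Finset.univ.filter fun k => res.dg i k = j).card

/-- `I` has a `d`-linear resolution: it has a minimal graded free resolution in which the
`i`-th free module is generated entirely in degree `i + d`, i.e. `β_{i,j}(I) = 0`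
whenever `j - i ≠ d`. -/
def HasLinRes {K : Type} [Field K] {σ : Type} (I : Ideal (MvPolynomial σ K))
    (d : ℕ) : Prop :=
  ∃ res : MinFreeRes I, ∀ i k, res.dg i k = i + d

/-- `reg I ≤ r`: a minimal graded free resolution of `I` has all generators of the
`i`-th free module in degrees `≤ i + r`, i.e. `β_{i,j}(I) = 0` whenever `j - i > r`. -/
def RegLE {K : Type} [Field K] {σ : Type} (I : Ideal (MvPolynomial σ K)) (r : ℕ) : Prop :=
  ∃ res : MinFreeRes I, ∀ i k, res.dg i k ≤ i + r

/-- The squarefree exponent vector of a subset `s ⊆ [n]`, i.e. `x_s = ∏_{i ∈ s} x_i`. -/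
noncomputable def expOf {n : ℕ} (s : Finset (Fin n)) : Fin n →₀ ℕ :=
  ∑ i ∈ s, Finsupp.single i 1

/-!
The colon ideal `(x_{F̄_j} : j ≠ k) : x_{F̄_k}` is the squarefree monomial ideal generated by
the `x_{F_k \ F_j}`, and such an ideal is generated by variables iff every generator is
divisible by a generator of degree one. On the combinatorial side, every maximal face of
`⟨F_k⟩ ∩ ⟨F_j : j ≠ k⟩` is some `F_k ∩ F_j`, and each `F_k ∩ F_j` lies in a maximal one, so purity
in codimension one says the same thing: every `F_k \ F_j` contains a vertex `i` with
`F_k \ F_{j'} = {i}` for some `j' ≠ k`.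
-/

lemma expOf_apply {n : ℕ} (s : Finset (Fin n)) (i : Fin n) :
    expOf s i = if i ∈ s then 1 else 0 := by
  classical
  simp [expOf, Finsupp.finsetSum_apply, Finsupp.single_apply]

lemma expOf_singleton {n : ℕ} (i : Fin n) : expOf {i} = Finsupp.single i 1 := by
  simp [expOf]

lemma expOf_le_expOf_iff {n : ℕ} {s t : Finset (Fin n)} : expOf s ≤ expOf t ↔ s ⊆ t := by
  refine ⟨fun h i hi => ?_, fun h i => ?_⟩
  · have := h i
    rw [expOf_apply, expOf_apply, if_pos hi] at this
    by_contra hit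
    rw [if_neg hit] at this
    omega
  · rw [expOf_apply, expOf_apply]
    split_ifs with hs ht <;> first | omega | exact absurd (h hs) ‹_›

lemma expOf_compl_le_add_expOf_compl_iff {n : ℕ} (s t : Finset (Fin n)) (w : Fin n →₀ ℕ) :
    expOf sᶜ ≤ w + expOf tᶜ ↔ expOf (t \ s) ≤ w := by
  refine forall_congr' fun i => ?_
  simp only [Finsupp.coe_add, Pi.add_apply, expOf_apply, Finset.mem_compl, Finset.mem_sdiff]
  by_cases hs : i ∈ s <;> by_cases ht : i ∈ t <;> simp [hs, ht]

lemma mem_span_mon_image_iff {K : Type} [Field K] {σ : Type} {ι : Type*} (φ : ι → σ →₀ ℕ)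
    (S : Set ι) (f : MvPolynomial σ K) :
    f ∈ Ideal.span ((fun j => mon K (φ j)) '' S) ↔ ∀ w ∈ f.support, ∃ j ∈ S, φ j ≤ w := by
  have hgens : (fun j => mon K (φ j)) '' S = (fun u => monomial u (1 : K)) '' (φ '' S) := by
    rw [Set.image_image]; rfl
  rw [hgens, mem_ideal_span_monomial_image]
  simp only [Set.exists_mem_image]

lemma support_mul_monomial_one {K : Type} [Field K] {σ : Type} (f : MvPolynomial σ K)
    (v : σ →₀ ℕ) :
    (f * monomial v 1).support = f.support.map (addRightEmbedding v) :=
  AddMonoidAlgebra.support_coeff_mul_single f _ (by simp) _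

lemma mem_colon_span_mon_image_iff {K : Type} [Field K] {σ : Type} {ι : Type*} (φ : ι → σ →₀ ℕ)
    (S : Set ι) (v : σ →₀ ℕ) (f : MvPolynomial σ K) :
    f ∈ Submodule.colon (Ideal.span ((fun j => mon K (φ j)) '' S)) (Ideal.span {mon K v}) ↔
      ∀ w ∈ f.support, ∃ j ∈ S, φ j ≤ w + v := by
  rw [Ideal.mem_colon_span_singleton, mem_span_mon_image_iff, mon, support_mul_monomial_one]
  simp

lemma colon_span_mon_expOf_compl {K : Type} [Field K] {n : ℕ} {ι : Type*}
    (s : ι → Finset (Fin n)) (S : Set ι) (t : Finset (Fin n)) :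
    Submodule.colon (Ideal.span ((fun j => mon K (expOf (s j)ᶜ)) '' S))
        (Ideal.span {mon K (expOf tᶜ)}) =
      Ideal.span ((fun j => mon K (expOf (t \ s j))) '' S) := by
  ext f
  rw [mem_colon_span_mon_image_iff (fun j => expOf (s j)ᶜ),
    mem_span_mon_image_iff (fun j => expOf (t \ s j))]
  simp only [expOf_compl_le_add_expOf_compl_iff]

lemma X_eq_mon_expOf_singleton {K : Type} [Field K] {n : ℕ} (i : Fin n) :
    (X i : MvPolynomial (Fin n) K) = mon K (expOf {i}) := by
  rw [expOf_singleton]; rfl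

lemma genByVars_span_mon_expOf_iff {K : Type} [Field K] {n : ℕ} {ι : Type*}
    (D : ι → Finset (Fin n)) (S : Set ι) (hD : ∀ j ∈ S, (D j).Nonempty) :
    genByVars (Ideal.span ((fun j => mon K (expOf (D j))) '' S)) ↔
      ∀ j ∈ S, ∃ i ∈ D j, ∃ j' ∈ S, D j' = {i} := by
  constructor
  · rintro ⟨A, hA⟩ j hj
    have hDj : mon K (expOf (D j)) ∈ Ideal.span (X '' A) :=
      hA ▸ Ideal.subset_span ⟨j, hj, rfl⟩
    rw [mem_ideal_span_X_image] at hDj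
    obtain ⟨i, hiA, hi⟩ := hDj (expOf (D j)) (by simp [mon])
    have hiD : i ∈ D j := by
      by_contra h
      rw [expOf_apply, if_neg h] at hi
      exact hi rfl
    have hXi :
        (X i : MvPolynomial (Fin n) K) ∈ Ideal.span ((fun j => mon K (expOf (D j))) '' S) :=
      hA ▸ Ideal.subset_span ⟨i, hiA, rfl⟩
    rw [mem_span_mon_image_iff (fun j => expOf (D j)), support_X] at hXi
    obtain ⟨j', hj', hle⟩ := hXi _ (Finset.mem_singleton_self _)
    rw [← expOf_singleton, expOf_le_expOf_iff] at hle
    exact ⟨i, hiD, j', hj', (hD j' hj').subset_singleton_iff.mp hle⟩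
  · intro h
    refine ⟨{i | ∃ j' ∈ S, D j' = {i}}, le_antisymm ?_ ?_⟩
    · rw [Ideal.span_le]
      rintro _ ⟨j, hj, rfl⟩
      dsimp only
      obtain ⟨i, hi, hiA⟩ := h j hj
      rw [SetLike.mem_coe, mem_ideal_span_X_image]
      intro w hw
      refine ⟨i, hiA, ?_⟩
      rw [Finset.mem_singleton.mp (support_monomial_subset hw), expOf_apply, if_pos hi]
      exact one_ne_zero
    · rw [Ideal.span_le]
      rintro _ ⟨i, ⟨j', hj', hD'⟩, rfl⟩
      dsimp only
      rw [X_eq_mon_expOf_singleton, ← hD']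
      exact Ideal.subset_span ⟨j', hj', rfl⟩

section Shelling

variable {α ι : Type*} [DecidableEq α] {t : Finset α} {F : ι → Finset α} {S : Set ι}

lemma card_inter_add_one_eq_card_iff {s u : Finset α} :
    (s ∩ u).card + 1 = s.card ↔ ∃ i, s \ u = {i} := by
  rw [← Finset.card_eq_one, ← Finset.card_inter_add_card_sdiff s u]
  omega

lemma inter_subset_inter_iff_of_sdiff_eq_singleton {s u : Finset α} {i : α}
    (h : t \ u = {i}) : t ∩ s ⊆ t ∩ u ↔ i ∉ s := by
  have hi : i ∈ t \ u := h ▸ Finset.mem_singleton_self i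
  rw [Finset.mem_sdiff] at hi
  constructor
  · intro hsub his
    exact hi.2 (Finset.mem_inter.mp (hsub (Finset.mem_inter.mpr ⟨hi.1, his⟩))).2
  · intro his x hx
    rw [Finset.mem_inter] at hx ⊢
    refine ⟨hx.1, by_contra fun hxu => ?_⟩
    have hxi : x ∈ t \ u := Finset.mem_sdiff.mpr ⟨hx.1, hxu⟩
    rw [h, Finset.mem_singleton] at hxi
    exact his (hxi ▸ hx.2)

lemma eq_inter_of_maximal {G : Finset α}
    (hG : Maximal (fun H => H ⊆ t ∧ ∃ j ∈ S, H ⊆ F j) G) : ∃ j ∈ S, G = t ∩ F j := by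
  obtain ⟨hGt, j, hj, hGj⟩ := hG.prop
  exact ⟨j, hj, hG.eq_of_le ⟨Finset.inter_subset_left, j, hj, Finset.inter_subset_right⟩
    (Finset.subset_inter hGt hGj)⟩

lemma exists_inter_subset_maximal {j : ι} (hj : j ∈ S) :
    ∃ G, t ∩ F j ⊆ G ∧ Maximal (fun H => H ⊆ t ∧ ∃ j ∈ S, H ⊆ F j) G := by
  have hfin : {H : Finset α | H ⊆ t ∧ ∃ j ∈ S, H ⊆ F j}.Finite :=
    t.powerset.finite_toSet.subset fun H hH => Finset.mem_powerset.mpr hH.1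
  exact hfin.exists_le_maximal ⟨Finset.inter_subset_left, j, hj, Finset.inter_subset_right⟩

theorem maximal_card_add_one_eq_iff :
    (∀ G, Maximal (fun H => H ⊆ t ∧ ∃ j ∈ S, H ⊆ F j) G → G.card + 1 = t.card) ↔
      ∀ j ∈ S, ∃ i ∈ t \ F j, ∃ j' ∈ S, t \ F j' = {i} := by
  constructor
  · intro hpure j hj
    obtain ⟨G, hjG, hG⟩ := exists_inter_subset_maximal (t := t) hj
    obtain ⟨j', hj', rfl⟩ := eq_inter_of_maximal hG
    obtain ⟨i, hi⟩ := card_inter_add_one_eq_card_iff.mp (hpure _ hG)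
    have hit : i ∈ t := (Finset.mem_sdiff.mp (hi ▸ Finset.mem_singleton_self i)).1
    exact ⟨i, Finset.mem_sdiff.mpr
      ⟨hit, (inter_subset_inter_iff_of_sdiff_eq_singleton hi).mp hjG⟩, j', hj', hi⟩
  · intro hsing G hG
    obtain ⟨j, hj, rfl⟩ := eq_inter_of_maximal hG
    obtain ⟨i, hi, j', hj', hi'⟩ := hsing j hj
    have hsub : t ∩ F j ⊆ t ∩ F j' :=
      (inter_subset_inter_iff_of_sdiff_eq_singleton hi').mpr (Finset.mem_sdiff.mp hi).2
    rw [hG.eq_of_le ⟨Finset.inter_subset_left, j', hj', Finset.inter_subset_right⟩ hsub]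
    exact card_inter_add_one_eq_card_iff.mpr ⟨i, hi'⟩

end Shelling

/-- Let `Δ = ⟨F_0, …, F_k⟩` be a simplicial complex on `[n]` with facets
`F_0, …, F_k` (pairwise incomparable).  Then removing the last facet `F_k` is a shelling
move, i.e. `⟨F_k⟩ ∩ ⟨F_0, …, F_{k-1}⟩` is pure of dimension `dim F_k − 1` (every maximal
face `G` of this intersection satisfies `|G| = |F_k| − 1`), if and only if the colon
ideal `(x_{F̄_0}, …, x_{F̄_{k-1}}) : x_{F̄_k}` is generated by variables. -/
theorem stmt_0 {K : Type} [Field K] {n k : ℕ} (F : Fin (k + 1) → Finset (Fin n))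
    (hfacets : ∀ i j, F i ⊆ F j → i = j) :
    (∀ G : Finset (Fin n),
        Maximal (fun H => H ⊆ F (Fin.last k) ∧ ∃ j, j ≠ Fin.last k ∧ H ⊆ F j) G →
        G.card + 1 = (F (Fin.last k)).card)
    ↔ genByVars (Submodule.colon
        (Ideal.span ((fun j => mon K (expOf ((F j)ᶜ))) '' {j | j ≠ Fin.last k}))
        (Ideal.span {mon K (expOf ((F (Fin.last k))ᶜ))})) := by
  rw [colon_span_mon_expOf_compl, genByVars_span_mon_expOf_iff]
  · exact maximal_card_add_one_eq_iff
  · exact fun j hj => Finset.sdiff_nonempty.mpr fun h => hj (hfacets _ _ h).symm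
end

section
/- Every monomial ideal of K[x₁,...,x_n] that has a linear resolution is quasi-linear. -/
open MvPolynomial

/-!
If `I = (x^v : v ∈ S)` has a `d`-linear resolution, its first free module is generated by
forms `g` of degree `d` whose first syzygies have linear entries. Minimality forces every
`v ∈ S` into degree `d`, so the `g` and the monomials `x^v` are related by mutually inverse
scalar matrices, and the syzygies of the monomials are generated by linear ones as well.
Now if `f x^u ∈ (S \ {u})`, there is a syzygy of the monomials with `u`-entry `f`; expanding it
in linear syzygies writes `f` as a combination of linear forms `ℓ` with `ℓ x^u ∈ (S \ {u})`,
and in a monomial ideal such an `ℓ` is a combination of variables `x_i` with `x_i x^u ∈ (S \ {u})`.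
-/

open Matrix

theorem Finsupp.eq_of_le_of_degree_eq {σ : Type*} {s t : σ →₀ ℕ} (hst : s ≤ t)
    (hdeg : s.degree = t.degree) : s = t := by
  obtain ⟨r, rfl⟩ := le_iff_exists_add.mp hst
  rw [map_add, left_eq_add, Finsupp.degree_eq_zero_iff] at hdeg
  rw [hdeg, add_zero]

section HomogeneousComponent

variable {R σ : Type*} [CommSemiring R]

attribute [local instance] MvPolynomial.gradedAlgebra in
theorem homogeneousComponent_mul_of_isHomogeneous {g : MvPolynomial σ R} {d : ℕ}
    (hg : g.IsHomogeneous d) (p : MvPolynomial σ R) :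
    homogeneousComponent d (p * g) = C (coeff 0 p) * g := by
  have := DirectSum.coe_decompose_mul_of_right_mem_of_le (𝒜 := homogeneousSubmodule σ R)
    (a := p) ((mem_homogeneousSubmodule d g).mpr hg) le_rfl
  rw [Nat.sub_self] at this
  rw [← homogeneousComponent_zero, ← decomposition.decompose'_apply,
    ← decomposition.decompose'_apply]
  exact this

theorem exists_eq_sum_C_mul_of_mem_span {ι : Type*} [Fintype ι] {g : ι → MvPolynomial σ R}
    {p : MvPolynomial σ R} {d : ℕ} (hg : ∀ k, (g k).IsHomogeneous d) (hp : p.IsHomogeneous d)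
    (hmem : p ∈ Ideal.span (Set.range g)) : ∃ c : ι → R, p = ∑ k, C (c k) * g k := by
  obtain ⟨a, rfl⟩ := Ideal.mem_span_range_iff_exists_fun.mp hmem
  refine ⟨fun k => coeff 0 (a k), ?_⟩
  rw [← homogeneousComponent_eq_self hp, map_sum]
  exact Finset.sum_congr rfl fun k _ => homogeneousComponent_mul_of_isHomogeneous (hg k) _

end HomogeneousComponent

section Syzygies

variable {R ι : Type*} [CommRing R] [Fintype ι] [DecidableEq ι]

theorem exists_dotProduct_eq_zero_of_mul_mem_span (m : ι → R) (u : ι) {f : R}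
    (hf : f * m u ∈ Ideal.span (m '' {u}ᶜ)) : ∃ y : ι → R, y ⬝ᵥ m = 0 ∧ y u = f := by
  obtain ⟨l, hl, hlm⟩ := (Finsupp.mem_span_image_iff_linearCombination R).mp hf
  have hlu : l u = 0 := (Finsupp.mem_supported' R l).mp hl u (by simp)
  refine ⟨Pi.single u f - ⇑l, ?_, by simp [hlu]⟩
  rw [sub_dotProduct, single_dotProduct, ← hlm, Finsupp.linearCombination_apply,
    Finsupp.sum_fintype _ _ (by simp)]
  simp [dotProduct]

theorem mul_mem_span_of_dotProduct_eq_zero {m y : ι → R} (hy : y ⬝ᵥ m = 0) (u : ι) :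
    y u * m u ∈ Ideal.span (m '' {u}ᶜ) := by
  have hsplit := Finset.add_sum_erase Finset.univ (fun v => y v * m v) (Finset.mem_univ u)
  rw [← dotProduct, hy, add_eq_zero_iff_eq_neg] at hsplit
  rw [hsplit]
  refine neg_mem (Ideal.sum_mem _ fun v hv => Ideal.mul_mem_left _ _ (Ideal.subset_span ?_))
  exact ⟨v, Finset.ne_of_mem_erase hv, rfl⟩

end Syzygies

section LinearSyzygies

variable {R σ ι κ : Type*} [CommRing R] [Fintype ι] [Fintype κ]

def linearSyzygies (m : ι → MvPolynomial σ R) : Set (ι → MvPolynomial σ R) :=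
  {z | z ⬝ᵥ m = 0 ∧ ∀ i, (z i).IsHomogeneous 1}

def HasLinearSyzygies (m : ι → MvPolynomial σ R) : Prop :=
  ∀ y, y ⬝ᵥ m = 0 → y ∈ Submodule.span (MvPolynomial σ R) (linearSyzygies m)

theorem HasLinearSyzygies.of_scalar_change [DecidableEq ι] {g : κ → MvPolynomial σ R}
    {m : ι → MvPolynomial σ R} (P : Matrix κ ι R) (Q : Matrix ι κ R)
    (hg : g = P.map C *ᵥ m) (hm : m = Q.map C *ᵥ g) (hQP : Q * P = 1)
    (h : HasLinearSyzygies g) : HasLinearSyzygies m := by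
  let φ := (P.map (C : R →+* MvPolynomial σ R)).vecMulLinear
  have hφ : Submodule.span _ (linearSyzygies g) ≤
      (Submodule.span _ (linearSyzygies m)).comap φ := by
    refine Submodule.span_le.mpr fun z ⟨hz, hlin⟩ => Submodule.subset_span ⟨?_, fun v => ?_⟩
    · rw [vecMulLinear_apply, ← dotProduct_mulVec, ← hg, hz]
    · rw [vecMulLinear_apply, vecMul]
      exact IsHomogeneous.sum _ _ _ fun k _ => (hlin k).mul (isHomogeneous_C _ _)
  intro y hy
  have hyQP : (y ᵥ* Q.map C) ᵥ* P.map C = y := by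
    rw [vecMul_vecMul, ← Matrix.map_mul, hQP, Matrix.map_one _ C.map_zero C.map_one, vecMul_one]
  rw [← hyQP]
  refine hφ (h _ ?_)
  rw [← dotProduct_mulVec, ← hm, hy]

end LinearSyzygies

section MonomialIdeal

variable {K : Type} [Field K] {σ : Type}

theorem MinFreeRes.hasLinearSyzygies {I : Ideal (MvPolynomial σ K)} (res : MinFreeRes I)
    {d : ℕ} (hdg : ∀ i k, res.dg i k = i + d) : HasLinearSyzygies res.g := by
  have hsyz : ∀ y, y ⬝ᵥ res.g = 0 ↔ y ∈ LinearMap.range (res.A 0).mulVecLin := fun y => by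
    rw [← res.aug_exact, LinearMap.mem_ker, Fintype.linearCombination_apply]
    rfl
  intro y hy
  refine Submodule.span_mono ?_ (range_mulVecLin (res.A 0) ▸ (hsyz y).mp hy)
  rintro _ ⟨l, rfl⟩
  refine ⟨(hsyz _).mpr ⟨Pi.single l 1, by simp [mulVec_single]⟩, fun k => ?_⟩
  rcases res.A_hom 0 k l with h | ⟨h, -⟩
  · simp [h, isHomogeneous_zero]
  · simpa [hdg] using h

theorem mem_span_X_of_isHomogeneous_one_of_mul_mem {T : Set (σ →₀ ℕ)} {w : σ →₀ ℕ}
    {f : MvPolynomial σ K} (hf : f.IsHomogeneous 1) (hfw : f * mon K w ∈ monIdeal K T) :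
    f ∈ Ideal.span (X '' {i | X i * mon K w ∈ monIdeal K T}) := by
  classical
  rw [mem_ideal_span_X_image]
  intro m hm
  obtain ⟨i, rfl⟩ := (Finsupp.sum_eq_one_iff m).mp (hf.degree_eq_sum_deg_support hm).symm
  refine ⟨i, ?_, by simp⟩
  have hcoeff : Finsupp.single i 1 + w ∈ (f * mon K w).support := by
    rw [mem_support_iff, mon, coeff_mul_monomial, mul_one]
    exact mem_support_iff.mp hm
  obtain ⟨s, hs, hsle⟩ := mem_ideal_span_monomial_image.mp hfw _ hcoeff
  rw [Set.mem_ofPred_eq, mon, X, monomial_mul, one_mul]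
  exact mem_ideal_span_monomial_image.mpr fun v hv =>
    ⟨s, hs, by rwa [Finset.mem_singleton.mp (support_monomial_subset hv)]⟩

theorem quasiLinear_of_hasLinearSyzygies (S : Set (σ →₀ ℕ)) [Fintype S]
    (h : HasLinearSyzygies fun v : S => mon K (v : σ →₀ ℕ)) : QuasiLinear K S := by
  classical
  intro u hu
  set m : S → MvPolynomial σ K := fun v => mon K v
  set I' := monIdeal K (S \ {u})
  have hI' : I' = Ideal.span (m '' {⟨u, hu⟩}ᶜ) := by
    have hval : Subtype.val '' ({⟨u, hu⟩}ᶜ : Set S) = S \ {u} := by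
      ext v
      simp
    rw [← Set.image_image, hval]
    rfl
  refine ⟨{i | X i * mon K u ∈ I'}, le_antisymm ?_ ?_⟩
  · intro f hf
    have hfu : f * m ⟨u, hu⟩ ∈ Ideal.span (m '' {⟨u, hu⟩}ᶜ) := by
      rw [← hI']
      exact Submodule.mem_colon.mp hf _ (Ideal.mem_span_singleton_self _)
    obtain ⟨y, hy, rfl⟩ := exists_dotProduct_eq_zero_of_mul_mem_span m _ hfu
    suffices Submodule.span _ (linearSyzygies m) ≤ Submodule.comap
        (LinearMap.proj (R := MvPolynomial σ K) (φ := fun _ : S => MvPolynomial σ K) ⟨u, hu⟩)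
        (Ideal.span (X '' {i | X i * mon K u ∈ I'})) from
      this (h y hy)
    refine Submodule.span_le.mpr fun z ⟨hz, hlin⟩ => ?_
    refine mem_span_X_of_isHomogeneous_one_of_mul_mem (hlin _) ?_
    change z ⟨u, hu⟩ * m ⟨u, hu⟩ ∈ I'
    rw [hI']
    exact mul_mem_span_of_dotProduct_eq_zero hz _
  · refine Ideal.span_le.mpr ?_
    rintro _ ⟨i, hi, rfl⟩
    refine Submodule.mem_colon.mpr fun p hp => ?_
    obtain ⟨a, rfl⟩ := Ideal.mem_span_singleton'.mp hp
    rw [smul_eq_mul, mul_left_comm]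
    exact Ideal.mul_mem_left _ _ hi

variable {S : Set (σ →₀ ℕ)}

theorem degree_eq_of_isMinGenSet {ι : Type*} [Fintype ι] (hS : IsMinGenSet S)
    {g : ι → MvPolynomial σ K} {d : ℕ} (hg : ∀ k, (g k).IsHomogeneous d)
    (hI : Ideal.span (Set.range g) = monIdeal K S) : ∀ v ∈ S, v.degree = d := by
  classical
  intro v hv
  obtain ⟨a, ha⟩ := Ideal.mem_span_range_iff_exists_fun.mp
    (hI ▸ Ideal.subset_span ⟨v, hv, rfl⟩ : mon K v ∈ Ideal.span (Set.range g))
  have hvsupp : v ∈ (∑ k, a k * g k).support := by simp [ha, mon]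
  obtain ⟨k, -, hk⟩ := Finset.mem_biUnion.mp (support_sum hvsupp)
  obtain ⟨b, -, c, hc, rfl⟩ := Finset.mem_add.mp (support_mul _ _ hk)
  -- `c` is divisible by some element of `S`, which must be `b + c` since `S` is an antichain.
  obtain ⟨s, hs, hsc⟩ := mem_ideal_span_monomial_image.mp
    (hI ▸ Ideal.subset_span ⟨k, rfl⟩ : g k ∈ monIdeal K S) c hc
  have hcv : c = b + c := le_antisymm le_add_self
    (hS s hs _ hv (hsc.trans le_add_self) ▸ hsc)
  rw [← hcv]
  exact ((hg k).degree_eq_sum_deg_support hc).symm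

theorem support_subset_of_mem_monIdeal {d : ℕ} (hS : ∀ v ∈ S, v.degree = d)
    {p : MvPolynomial σ K} (hp : p ∈ monIdeal K S) (hpd : p.IsHomogeneous d) :
    ↑p.support ⊆ S := by
  intro t ht
  obtain ⟨s, hs, hst⟩ := mem_ideal_span_monomial_image.mp hp t ht
  rwa [← Finsupp.eq_of_le_of_degree_eq hst
    ((hS s hs).trans (hpd.degree_eq_sum_deg_support ht))]

theorem eq_sum_C_mul_mon_of_support_subset [Fintype S] {p : MvPolynomial σ K}
    (hp : ↑p.support ⊆ S) : p = ∑ v : S, C (coeff v p) * mon K v := by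
  classical
  simp only [mon, C_mul_monomial, mul_one]
  rw [← Finset.sum_subtype S.toFinset (fun _ => Set.mem_toFinset)
    fun v => monomial v (coeff v p), ← Finset.sum_subset (fun v hv => Set.mem_toFinset.mpr (hp hv))
    fun v _ hv => by rw [notMem_support_iff.mp hv, map_zero]]
  exact p.as_sum

theorem Matrix.eq_one_of_map_C_mulVec_mon [Fintype S] [DecidableEq S] (M : Matrix S S K)
    (hM : M.map C *ᵥ (fun v : S => mon K (v : σ →₀ ℕ)) = fun v : S => mon K (v : σ →₀ ℕ)) :
    M = 1 := by
  classical
  ext v w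
  have := congrArg (coeff (w : σ →₀ ℕ)) (congrFun hM v)
  simp only [mulVec, dotProduct, map_apply, mon, C_mul_monomial, mul_one, coeff_sum,
    coeff_monomial, ← Subtype.ext_iff] at this
  simpa [one_apply] using this

theorem hasLinearSyzygies_mon_of_span_eq [Fintype S] (hS : IsMinGenSet S) {ι : Type*}
    [Fintype ι] {g : ι → MvPolynomial σ K} {d : ℕ} (hg : ∀ k, (g k).IsHomogeneous d)
    (hI : Ideal.span (Set.range g) = monIdeal K S) (hlin : HasLinearSyzygies g) :
    HasLinearSyzygies fun v : S => mon K (v : σ →₀ ℕ) := by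
  classical
  set m := fun v : S => mon K (v : σ →₀ ℕ)
  have hdeg := degree_eq_of_isMinGenSet hS hg hI
  let P : Matrix ι S K := of fun k v => coeff v (g k)
  have hP : g = P.map C *ᵥ m := funext fun k => eq_sum_C_mul_mon_of_support_subset
    (support_subset_of_mem_monIdeal hdeg (hI ▸ Ideal.subset_span ⟨k, rfl⟩) (hg k))
  choose c hc using fun v : S => exists_eq_sum_C_mul_of_mem_span hg
    (isHomogeneous_monomial _ (hdeg v v.2)) (by rw [hI]; exact Ideal.subset_span ⟨v, v.2, rfl⟩)
  let Q : Matrix S ι K := of c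
  have hm : m = Q.map C *ᵥ g := funext hc
  have hQP : Q * P = 1 := by
    refine eq_one_of_map_C_mulVec_mon _ ?_
    rw [Matrix.map_mul, ← mulVec_mulVec, ← hP, ← hm]
  exact hlin.of_scalar_change P Q hP hm hQP

end MonomialIdeal

/-- Every monomial ideal (with minimal monomial generating set `S`)
that has a linear resolution is quasi-linear. -/
theorem stmt_3 {K : Type} [Field K] {n : ℕ} (S : Set (Fin n →₀ ℕ))
    (hfin : S.Finite) (hmin : IsMinGenSet S)
    (hlin : ∃ d, HasLinRes (monIdeal K S) d) :
    QuasiLinear K S := by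
  obtain ⟨d, res, hdg⟩ := hlin
  have := hfin.fintype
  have hg : ∀ k, (res.g k).IsHomogeneous d := fun k => by simpa [hdg] using res.g_hom k
  have hI : Ideal.span (Set.range res.g) = monIdeal K S :=
    (Fintype.range_linearCombination _ _).symm.trans res.aug_range
  exact quasiLinear_of_hasLinearSyzygies S
    (hasLinearSyzygies_mon_of_span_eq hmin hg hI (res.hasLinearSyzygies hdg))
end

section
/- A monomial ideal I with exactly two minimal monomial generators has a linear resolution if and only if there exist a monomial v and indices i ≠ j in [n] such that I = (v·x_i, v·x_j). -/
open MvPolynomial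

/-
If `I = (x^u₀, x^u₁)` has a `d`-linear resolution, the generators `g_k` of its first free module
are forms of degree `d` in the monomial ideal `I`, so `deg u₀ = deg u₁ = d` and every `g_k` is a
`K`-linear combination of `x^u₀` and `x^u₁`. Lifting the Koszul syzygy
`(x^(u₁ - u₀), -x^(u₀ - u₁))` along constant sections gives a syzygy of the `g_k`, hence a
combination of the linear columns of the first differential. The `x^u₀`-coordinate of each column is
a linear form divisible by `x^(u₁ - u₀)`, so it vanishes unless `deg (u₁ - u₀) ≤ 1`, while that of
the lifted syzygy is `x^(u₁ - u₀) ≠ 0`. By symmetry both differences are single variables.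
Conversely, for `I = (v x_i, v x_j)` the complex `0 → R(-d-1) → R(-d)² → I` with differential
`(x_j, -x_i)` is exact, since every syzygy of two monomials is a multiple of the Koszul one.
-/

namespace MonomialIdealPair

variable {K : Type} [Field K] {σ : Type}

theorem mon_mul (a b : σ →₀ ℕ) : mon K a * mon K b = mon K (a + b) := by
  simp [mon, monomial_mul]

theorem mon_ne_zero (a : σ →₀ ℕ) : mon K a ≠ 0 := by
  simp [mon]

theorem isHomogeneous_mon (a : σ →₀ ℕ) : (mon K a).IsHomogeneous a.degree :=
  isHomogeneous_monomial _ rfl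

theorem constantCoeff_mul_mon {a : σ →₀ ℕ} (ha : a ≠ 0) (p : MvPolynomial σ K) :
    constantCoeff (p * mon K a) = 0 := by
  classical
  simp [mon, constantCoeff_monomial, ha]

theorem degree_eq_of_mem_support {p : MvPolynomial σ K} {d : ℕ} (hp : p.IsHomogeneous d)
    {t : σ →₀ ℕ} (ht : t ∈ p.support) : t.degree = d := by
  rw [Finsupp.degree_eq_weight_one]
  exact hp (mem_support_iff.1 ht)

theorem eq_of_le_of_degree_eq {s t : σ →₀ ℕ} (hle : s ≤ t) (hdeg : s.degree = t.degree) :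
    s = t := by
  rw [← add_tsub_cancel_of_le hle, map_add, left_eq_add, Finsupp.degree_eq_zero_iff] at hdeg
  rw [← add_tsub_cancel_of_le hle, hdeg, add_zero]

theorem mem_monIdeal {S : Set (σ →₀ ℕ)} {p : MvPolynomial σ K} :
    p ∈ monIdeal K S ↔ ∀ t ∈ p.support, ∃ s ∈ S, s ≤ t :=
  mem_ideal_span_monomial_image

theorem mon_dvd_iff_mem_monIdeal {f : σ →₀ ℕ} {p : MvPolynomial σ K} :
    mon K f ∣ p ↔ p ∈ monIdeal K {f} := by
  rw [monIdeal, Set.image_singleton, Ideal.mem_span_singleton]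

theorem mon_dvd_of_mon_dvd_mul_mon {e f : σ →₀ ℕ} (hef : f ⊓ e = 0) {p : MvPolynomial σ K}
    (h : mon K f ∣ p * mon K e) : mon K f ∣ p := by
  classical
  rw [mon_dvd_iff_mem_monIdeal, mem_monIdeal] at h ⊢
  intro m hm
  obtain ⟨f', rfl, hle⟩ := h (m + e) (by simpa [mon, coeff_mul_monomial] using hm)
  refine ⟨f', rfl, fun k => ?_⟩
  have hk := hle k
  have hefk := DFunLike.congr_fun hef k
  simp only [Finsupp.add_apply, Finsupp.inf_apply, Finsupp.coe_zero, Pi.zero_apply] at hk hefk ⊢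
  omega

theorem tsub_add_inf (s t : σ →₀ ℕ) : s - t + s ⊓ t = s := by
  ext k
  simp only [Finsupp.add_apply, Finsupp.tsub_apply, Finsupp.inf_apply]
  omega

theorem mul_mon_add_mul_mon_eq_zero_iff {u₀ u₁ : σ →₀ ℕ} {a b : MvPolynomial σ K} :
    a * mon K u₀ + b * mon K u₁ = 0 ↔
      ∃ c, a = c * mon K (u₁ - u₀) ∧ b = -(c * mon K (u₀ - u₁)) := by
  have h₀ : mon K u₀ = mon K (u₀ - u₁) * mon K (u₀ ⊓ u₁) := by
    rw [mon_mul, tsub_add_inf]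
  have h₁ : mon K u₁ = mon K (u₁ - u₀) * mon K (u₀ ⊓ u₁) := by
    rw [mon_mul, inf_comm, tsub_add_inf]
  have hfactor : a * mon K u₀ + b * mon K u₁ =
      (a * mon K (u₀ - u₁) + b * mon K (u₁ - u₀)) * mon K (u₀ ⊓ u₁) := by
    rw [h₀, h₁]
    ring
  rw [hfactor, mul_eq_zero, or_iff_left (mon_ne_zero _), add_eq_zero_iff_eq_neg]
  constructor
  · intro h
    have hdisj : (u₁ - u₀) ⊓ (u₀ - u₁) = 0 := by
      ext k
      simp only [Finsupp.inf_apply, Finsupp.tsub_apply, Finsupp.coe_zero, Pi.zero_apply]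
      omega
    obtain ⟨c, rfl⟩ := mon_dvd_of_mon_dvd_mul_mon hdisj ⟨-b, by rw [h]; ring⟩
    refine ⟨c, mul_comm _ _, mul_right_cancel₀ (mon_ne_zero (u₁ - u₀)) ?_⟩
    linear_combination h
  · rintro ⟨c, rfl, rfl⟩
    ring

theorem sum_mul_C_mul_mon_add {ι : Type} [Fintype ι] (x : ι → MvPolynomial σ K)
    (c e : ι → K) (u₀ u₁ : σ →₀ ℕ) :
    ∑ k, x k * (C (c k) * mon K u₀ + C (e k) * mon K u₁) =
      (∑ k, x k * C (c k)) * mon K u₀ + (∑ k, x k * C (e k)) * mon K u₁ := by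
  simp only [Finset.sum_mul, ← Finset.sum_add_distrib]
  exact Finset.sum_congr rfl fun k _ => by ring

theorem eq_zero_of_isHomogeneous_of_mon_dvd {p : MvPolynomial σ K} {n : ℕ}
    (hp : p.IsHomogeneous n) {f : σ →₀ ℕ} (hdvd : mon K f ∣ p) (hn : n < f.degree) : p = 0 := by
  by_contra hp0
  obtain ⟨q, rfl⟩ := hdvd
  have hdeg := hp.totalDegree hp0
  rw [totalDegree_mul_of_isDomain (mon_ne_zero f) (right_ne_zero_of_mul hp0), mon,
    totalDegree_monomial _ one_ne_zero] at hdeg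
  have : f.degree = f.sum fun _ e => e := rfl
  omega

theorem degree_eq_of_span_eq_monIdeal_pair {ι : Type} [Fintype ι] {g : ι → MvPolynomial σ K}
    {d : ℕ} (hg : ∀ k, (g k).IsHomogeneous d) {u₀ u₁ : σ →₀ ℕ}
    (hspan : Ideal.span (Set.range g) = monIdeal K {u₀, u₁}) (h₁₀ : ¬ u₁ ≤ u₀) :
    u₀.degree = d := by
  classical
  have hmem : mon K u₀ ∈ Ideal.span (Set.range g) :=
    hspan ▸ Ideal.subset_span ⟨u₀, by simp, rfl⟩
  obtain ⟨p, hp⟩ := Ideal.mem_span_range_iff_exists_fun.1 hmem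
  have hu₀ : u₀ ∈ (∑ k, p k * g k).support := by simp [hp, mon, support_monomial]
  obtain ⟨k, -, hk⟩ := Finset.mem_biUnion.1 (support_sum hu₀)
  obtain ⟨s, -, t, ht, hst⟩ := Finset.mem_add.1 (support_mul _ _ hk)
  have htu₀ : t ≤ u₀ := hst ▸ le_add_self
  have hgk : g k ∈ monIdeal K {u₀, u₁} := hspan ▸ Ideal.subset_span (Set.mem_range_self k)
  obtain ⟨s', hs', hs't⟩ := mem_monIdeal.1 hgk t ht
  rcases hs' with rfl | rfl
  · rw [← le_antisymm htu₀ hs't]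
    exact degree_eq_of_mem_support (hg k) ht
  · exact absurd (hs't.trans htu₀) h₁₀

theorem eq_C_mul_mon_add_C_mul_mon {p : MvPolynomial σ K} {d : ℕ} (hp : p.IsHomogeneous d)
    {u₀ u₁ : σ →₀ ℕ} (hmem : p ∈ monIdeal K {u₀, u₁}) (h₀ : u₀.degree = d)
    (h₁ : u₁.degree = d) (hne : u₀ ≠ u₁) :
    p = C (coeff u₀ p) * mon K u₀ + C (coeff u₁ p) * mon K u₁ := by
  classical
  ext m
  simp only [coeff_add, mon, coeff_C_mul, coeff_monomial, mul_ite, mul_one, mul_zero]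
  by_cases hm₀ : u₀ = m
  · simp [← hm₀, hne.symm]
  by_cases hm₁ : u₁ = m
  · simp [← hm₁, hne]
  rw [if_neg hm₀, if_neg hm₁, add_zero, ← notMem_support_iff]
  intro hm
  obtain ⟨s, hs, hsm⟩ := mem_monIdeal.1 hmem m hm
  have hdeg := degree_eq_of_mem_support hp hm
  rcases hs with rfl | rfl
  · exact hm₀ (eq_of_le_of_degree_eq hsm (h₀.trans hdeg.symm))
  · exact hm₁ (eq_of_le_of_degree_eq hsm (h₁.trans hdeg.symm))

theorem exists_sum_mul_eq_one_and_eq_zero {ι : Type} [Fintype ι] {c e : ι → K}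
    {u₀ u₁ : σ →₀ ℕ} (h₀₁ : ¬ u₀ ≤ u₁) (h₁₀ : ¬ u₁ ≤ u₀)
    (hmem : mon K u₀ ∈ Ideal.span (Set.range fun k => C (c k) * mon K u₀ + C (e k) * mon K u₁)) :
    ∃ a : ι → K, ∑ k, a k * c k = 1 ∧ ∑ k, a k * e k = 0 := by
  obtain ⟨p, hp⟩ := Ideal.mem_span_range_iff_exists_fun.1 hmem
  rw [sum_mul_C_mul_mon_add] at hp
  have hsyz : (∑ k, p k * C (c k) - 1) * mon K u₀ + (∑ k, p k * C (e k)) * mon K u₁ = 0 := by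
    linear_combination hp
  obtain ⟨r, hr₀, hr₁⟩ := mul_mon_add_mul_mon_eq_zero_iff.1 hsyz
  refine ⟨fun k => constantCoeff (p k), ?_, ?_⟩
  · have := congrArg constantCoeff hr₀
    rw [constantCoeff_mul_mon (by simpa [tsub_eq_zero_iff_le] using h₁₀)] at this
    simpa [sub_eq_zero] using this
  · have := congrArg constantCoeff hr₁
    rw [map_neg, constantCoeff_mul_mon (by simpa [tsub_eq_zero_iff_le] using h₀₁)] at this
    simpa using this

theorem degree_tsub_le_one_of_linear_syzygies {ι κ : Type} [Fintype ι] [Fintype κ]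
    {g : ι → MvPolynomial σ K} {d : ℕ} (hg : ∀ k, (g k).IsHomogeneous d) {u₀ u₁ : σ →₀ ℕ}
    (hspan : Ideal.span (Set.range g) = monIdeal K {u₀, u₁}) (h₀₁ : ¬ u₀ ≤ u₁)
    (h₁₀ : ¬ u₁ ≤ u₀) (A : Matrix ι κ (MvPolynomial σ K)) (hA : ∀ k l, (A k l).IsHomogeneous 1)
    (hker : LinearMap.ker (Fintype.linearCombination (MvPolynomial σ K) g) =
      LinearMap.range A.mulVecLin) :
    (u₁ - u₀).degree ≤ 1 := by
  have hd₀ := degree_eq_of_span_eq_monIdeal_pair hg hspan h₁₀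
  have hd₁ := degree_eq_of_span_eq_monIdeal_pair hg (Set.pair_comm u₀ u₁ ▸ hspan) h₀₁
  set c : ι → K := fun k => coeff u₀ (g k)
  set e : ι → K := fun k => coeff u₁ (g k)
  have hge : g = fun k => C (c k) * mon K u₀ + C (e k) * mon K u₁ := by
    funext k
    exact eq_C_mul_mon_add_C_mul_mon (hg k) (hspan ▸ Ideal.subset_span (Set.mem_range_self k))
        hd₀ hd₁ fun h => h₀₁ h.le
  have hmem (u : σ →₀ ℕ) (hu : u ∈ ({u₀, u₁} : Set _)) : mon K u ∈ Ideal.span (Set.range g) :=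
    hspan ▸ Ideal.subset_span ⟨u, hu, rfl⟩
  obtain ⟨a, hac, hae⟩ := exists_sum_mul_eq_one_and_eq_zero h₀₁ h₁₀ (hge ▸ hmem u₀ (by simp))
  obtain ⟨b, hbe, hbc⟩ := exists_sum_mul_eq_one_and_eq_zero h₁₀ h₀₁
    ((hge.trans (_root_.funext fun k => add_comm _ _)) ▸ hmem u₁ (by simp))
  have hlc (x : ι → MvPolynomial σ K) : Fintype.linearCombination (MvPolynomial σ K) g x =
      (∑ k, x k * C (c k)) * mon K u₀ + (∑ k, x k * C (e k)) * mon K u₁ := by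
    rw [Fintype.linearCombination_apply, hge, ← sum_mul_C_mul_mon_add]
    rfl
  -- The Koszul syzygy of `(x^u₀, x^u₁)`, lifted along the scalar sections `a` and `b`.
  set S : ι → MvPolynomial σ K := fun k => C (a k) * mon K (u₁ - u₀) - C (b k) * mon K (u₀ - u₁)
  have hSw (w : ι → K) : ∑ k, S k * C (w k) =
      C (∑ k, a k * w k) * mon K (u₁ - u₀) - C (∑ k, b k * w k) * mon K (u₀ - u₁) := by
    simp only [S, map_sum, map_mul, Finset.sum_mul, ← Finset.sum_sub_distrib]
    exact Finset.sum_congr rfl fun k _ => by ring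
  have hSc : ∑ k, S k * C (c k) = mon K (u₁ - u₀) := by simp [hSw, hac, hbc]
  have hSe : ∑ k, S k * C (e k) = -mon K (u₀ - u₁) := by simp [hSw, hae, hbe]
  have hS : S ∈ LinearMap.ker (Fintype.linearCombination (MvPolynomial σ K) g) := by
    rw [LinearMap.mem_ker, hlc, hSc, hSe]
    exact mul_mon_add_mul_mon_eq_zero_iff.2 ⟨1, by ring, by ring⟩
  by_contra! hδ
  set φ := Fintype.linearCombination (MvPolynomial σ K) fun k => (C (c k) : MvPolynomial σ K)
  have hcol (l : κ) : A.col l ∈ LinearMap.ker φ := by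
    have hl : A.col l ∈ LinearMap.ker (Fintype.linearCombination (MvPolynomial σ K) g) := by
      rw [hker, Matrix.range_mulVecLin]
      exact Submodule.subset_span (Set.mem_range_self l)
    rw [LinearMap.mem_ker, hlc] at hl
    obtain ⟨r, hr, -⟩ := mul_mon_add_mul_mon_eq_zero_iff.1 hl
    have hlin : (∑ k, A.col l k * C (c k)).IsHomogeneous 1 :=
      IsHomogeneous.sum _ _ _ fun k _ => (hA k l).mul (isHomogeneous_C _ _)
    exact eq_zero_of_isHomogeneous_of_mon_dvd hlin ⟨r, hr.trans (mul_comm _ _)⟩ hδ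
  have hφS : φ S = 0 := by
    rw [← LinearMap.mem_ker]
    refine (?_ : LinearMap.range A.mulVecLin ≤ LinearMap.ker φ) (hker ▸ hS)
    rw [Matrix.range_mulVecLin]
    exact Submodule.span_le.2 (Set.range_subset_iff.2 hcol)
  exact mon_ne_zero (u₁ - u₀) (hSc.symm.trans hφS)

theorem degree_tsub_le_one_of_hasLinRes {u₀ u₁ : σ →₀ ℕ} {d : ℕ}
    (h : HasLinRes (monIdeal K {u₀, u₁}) d) (h₀₁ : ¬ u₀ ≤ u₁) (h₁₀ : ¬ u₁ ≤ u₀) :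
    (u₁ - u₀).degree ≤ 1 := by
  obtain ⟨res, hdg⟩ := h
  refine degree_tsub_le_one_of_linear_syzygies (d := d) (fun k => ?_) ?_ h₀₁ h₁₀ (res.A 0)
    (fun k l => ?_) res.aug_exact
  · simpa [hdg] using res.g_hom k
  · exact (Fintype.range_linearCombination _ _).symm.trans res.aug_range
  · rcases res.A_hom 0 k l with h0 | ⟨hhom, -⟩
    · rw [h0]
      exact isHomogeneous_zero _ _ _
    · simpa [hdg] using hhom

theorem exists_eq_single_of_degree_eq_one {f : σ →₀ ℕ} (hf : f.degree = 1) :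
    ∃ i, f = Finsupp.single i 1 := by
  obtain ⟨i, hi⟩ : ∃ i, f i ≠ 0 := by
    by_contra! h
    simp [show f = 0 from Finsupp.ext h] at hf
  have hfi : 1 ≤ f i := by have := Finsupp.le_degree i f; omega
  exact ⟨i, (eq_of_le_of_degree_eq (Finsupp.single_le_iff.2 hfi) (by simp [hf])).symm⟩

theorem exists_eq_add_single_of_degree_tsub_le_one {u₀ u₁ : σ →₀ ℕ} (h₀₁ : ¬ u₀ ≤ u₁)
    (h₁₀ : ¬ u₁ ≤ u₀) (h₀ : (u₀ - u₁).degree ≤ 1) (h₁ : (u₁ - u₀).degree ≤ 1) :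
    ∃ v i j, i ≠ j ∧ u₀ = v + Finsupp.single i 1 ∧ u₁ = v + Finsupp.single j 1 := by
  have hpos {s t : σ →₀ ℕ} (h : ¬ s ≤ t) : (s - t).degree ≠ 0 := by
    rwa [Ne, Finsupp.degree_eq_zero_iff, tsub_eq_zero_iff_le]
  obtain ⟨i, hi⟩ := exists_eq_single_of_degree_eq_one (f := u₀ - u₁) (by have := hpos h₀₁; omega)
  obtain ⟨j, hj⟩ := exists_eq_single_of_degree_eq_one (f := u₁ - u₀) (by have := hpos h₁₀; omega)
  refine ⟨u₀ ⊓ u₁, i, j, ?_, ?_, ?_⟩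
  · rintro rfl
    have h₀i := DFunLike.congr_fun hi i
    have h₁i := DFunLike.congr_fun hj i
    simp only [Finsupp.tsub_apply, Finsupp.single_eq_same] at h₀i h₁i
    omega
  · rw [← hi, add_comm, tsub_add_inf]
  · rw [← hj, add_comm, inf_comm, tsub_add_inf]

abbrev pairRank : ℕ → ℕ
  | 0 => 2
  | 1 => 1
  | _ + 2 => 0

variable (K) in
noncomputable def pairDiff (u₀ u₁ : σ →₀ ℕ) :
    (n : ℕ) → Matrix (Fin (pairRank n)) (Fin (pairRank (n + 1))) (MvPolynomial σ K)
  | 0 => Matrix.of ![![mon K (u₁ - u₀)], ![-mon K (u₀ - u₁)]]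
  | _ + 1 => 0

theorem ker_linearCombination_pair (u₀ u₁ : σ →₀ ℕ) :
    LinearMap.ker (Fintype.linearCombination (MvPolynomial σ K) ![mon K u₀, mon K u₁]) =
      LinearMap.range (pairDiff K u₀ u₁ 0).mulVecLin := by
  ext x
  simp only [LinearMap.mem_ker, Fintype.linearCombination_apply, Fin.sum_univ_two, smul_eq_mul,
    Matrix.cons_val_zero, Matrix.cons_val_one, LinearMap.mem_range, Matrix.mulVecLin_apply]
  rw [mul_mon_add_mul_mon_eq_zero_iff]
  constructor
  · rintro ⟨c, h₀, h₁⟩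
    refine ⟨fun _ => c, funext (Fin.forall_fin_two.2 ⟨?_, ?_⟩)⟩ <;>
      simp [pairDiff, Matrix.mulVec, dotProduct, h₀, h₁, mul_comm]
  · rintro ⟨w, rfl⟩
    refine ⟨w 0, ?_, ?_⟩ <;> simp [pairDiff, Matrix.mulVec, dotProduct, mul_comm]

theorem ker_pairDiff_zero (u₀ u₁ : σ →₀ ℕ) :
    LinearMap.ker (pairDiff K u₀ u₁ 0).mulVecLin = ⊥ := by
  refine Matrix.ker_mulVecLin_eq_bot_iff.2 fun w hw => funext fun l => ?_
  have h₀ := congrFun hw 0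
  simp [pairDiff, Matrix.mulVec, dotProduct, mon_ne_zero] at h₀
  rw [Subsingleton.elim l 0, h₀, Pi.zero_apply]

theorem add_single_tsub_add_single {v : σ →₀ ℕ} {i j : σ} (hij : i ≠ j) :
    (v + Finsupp.single i 1) - (v + Finsupp.single j 1) = Finsupp.single i 1 := by
  rw [add_tsub_add_eq_tsub_left]
  ext k
  by_cases hik : i = k <;> by_cases hjk : j = k <;> simp_all

theorem hasLinRes_monIdeal_add_single_pair {v : σ →₀ ℕ} {i j : σ} (hij : i ≠ j) :
    HasLinRes (monIdeal K {v + Finsupp.single i 1, v + Finsupp.single j 1}) (v.degree + 1) := by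
  set u₀ := v + Finsupp.single i 1
  set u₁ := v + Finsupp.single j 1
  have hmon (u : σ →₀ ℕ) {n : ℕ} (hu : u.degree = n) : (mon K u).IsHomogeneous n :=
    hu ▸ isHomogeneous_mon u
  refine ⟨{ b := pairRank
            dg := fun n _ => n + (v.degree + 1)
            g := ![mon K u₀, mon K u₁]
            A := pairDiff K u₀ u₁
            g_hom := ?_
            A_hom := ?_
            aug_range := ?_
            aug_exact := ker_linearCombination_pair u₀ u₁
            is_exact := ?_ }, fun _ _ => rfl⟩
  · exact Fin.forall_fin_two.2 ⟨hmon _ (by simp [u₀]), hmon _ (by simp [u₁])⟩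
  · rintro (_ | n) k l
    · refine Or.inr ⟨?_, by omega⟩
      rw [show 0 + 1 + (v.degree + 1) - (0 + (v.degree + 1)) = 1 by omega]
      obtain rfl : l = 0 := Subsingleton.elim _ _
      revert k
      refine Fin.forall_fin_two.2 ⟨?_, ?_⟩
      · exact hmon (u₁ - u₀) (by simp [u₁, u₀, add_single_tsub_add_single hij.symm])
      · exact (hmon (u₀ - u₁) (by simp [u₁, u₀, add_single_tsub_add_single hij])).neg
    · exact Or.inl rfl
  · rw [Fintype.range_linearCombination, Matrix.range_cons_cons_empty, monIdeal, Set.image_pair]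
  · rintro (_ | n)
    · rw [ker_pairDiff_zero, eq_comm, LinearMap.range_eq_bot]
      exact Subsingleton.elim _ _
    · have : Subsingleton (Submodule (MvPolynomial σ K) (Fin 0 → MvPolynomial σ K)) :=
        (Submodule.subsingleton_iff _).2 inferInstance
      exact Subsingleton.elim _ _

end MonomialIdealPair

open MonomialIdealPair in
/-- A monomial ideal `I` with exactly two minimal monomial generators
has a linear resolution if and only if there exist a monomial `v` and indices `i ≠ j`
in `[n]` such that `I = (v·x_i, v·x_j)`. -/
theorem stmt_5 {K : Type} [Field K] {n : ℕ} (u : Fin 2 → (Fin n →₀ ℕ))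
    (hinj : Function.Injective u) (hmin : IsMinGenSet (Set.range u)) :
    (∃ d, HasLinRes (monIdeal K (Set.range u)) d)
    ↔ ∃ (v : Fin n →₀ ℕ) (i j : Fin n), i ≠ j ∧
        Set.range u = {v + Finsupp.single i 1, v + Finsupp.single j 1} := by
  have hrange : Set.range u = {u 0, u 1} := by
    ext x
    simp [Fin.exists_fin_two, eq_comm]
  have hne : u 0 ≠ u 1 := hinj.ne zero_ne_one
  have h₀₁ : ¬ u 0 ≤ u 1 := fun h => hne (hmin _ ⟨0, rfl⟩ _ ⟨1, rfl⟩ h)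
  have h₁₀ : ¬ u 1 ≤ u 0 := fun h => hne (hmin _ ⟨1, rfl⟩ _ ⟨0, rfl⟩ h).symm
  rw [hrange]
  constructor
  · rintro ⟨d, hd⟩
    obtain ⟨v, i, j, hij, h₀, h₁⟩ := exists_eq_add_single_of_degree_tsub_le_one h₀₁ h₁₀
      (degree_tsub_le_one_of_hasLinRes (Set.pair_comm (u 0) (u 1) ▸ hd) h₁₀ h₀₁)
      (degree_tsub_le_one_of_hasLinRes hd h₀₁ h₁₀)
    exact ⟨v, i, j, hij, by rw [h₀, h₁]⟩
  · rintro ⟨v, i, j, hij, h⟩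
    exact ⟨_, h ▸ hasLinRes_monIdeal_add_single_pair hij⟩
end

section
/- Let I be a monomial ideal of K[x₁,...,x_n] generated in degree 2. Then I is quasi-linear if and only if the induced matching number of the associated graph G_I equals 1. -/
open MvPolynomial

/-- The graph `G_I` associated to a monomial ideal generated in degree `2` with minimal
monomial generating set `S`: its vertices are `[n]` (left copy) together with the
underlined vertices `i̲` (right copy, used when `x_i² ∈ I`); `{i,j}` is an edge when
`x_i x_j ∈ I` (`i ≠ j`) and `{i, i̲}` is an edge when `x_i² ∈ I`. -/
def assocGraph {n : ℕ} (S : Set (Fin n →₀ ℕ)) : SimpleGraph (Fin n ⊕ Fin n) :=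
  SimpleGraph.fromRel (fun a b =>
    match a, b with
    | Sum.inl i, Sum.inl j => i ≠ j ∧ (Finsupp.single i 1 + Finsupp.single j 1) ∈ S
    | Sum.inl i, Sum.inr j => i = j ∧ Finsupp.single i 2 ∈ S
    | _, _ => False)

/-- The induced matching number of a graph equals `1`: the graph has an edge, but has no
induced matching of size two, i.e. no two disjoint edges with no edges between them. -/
def IndMatEqOne {V : Type} (G : SimpleGraph V) : Prop :=
  (∃ a b, G.Adj a b) ∧
  ¬ ∃ a b c d : V, G.Adj a b ∧ G.Adj c d ∧ a ≠ c ∧ a ≠ d ∧ b ≠ c ∧ b ≠ d ∧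
      ¬ G.Adj a c ∧ ¬ G.Adj a d ∧ ¬ G.Adj b c ∧ ¬ G.Adj b d

/-! For `u ∈ G(I)` the colon ideal `(G(I) \ {u}) : u` is the monomial ideal generated by the
quotients `v / gcd(u, v)`, so it is generated by variables iff each of them is divisible by a
quotient `w / gcd(w, u) = x_i` of degree one. In degree two, `v / gcd(u, v)` already has degree
one unless `u` and `v` have disjoint supports, and then such a `w` is exactly a generator
`x_p x_q` with `x_p ∣ u` and `x_q ∣ v`. As the generators are the edges of `G_I`, this says that
any two disjoint edges of `G_I` are joined by an edge, i.e. `indmat(G_I) = 1`. -/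

open Finsupp (single)

lemma mdeg_eq_degree {σ : Type} (u : σ →₀ ℕ) : mdeg u = u.degree := rfl

namespace Finsupp

variable {σ : Type}

lemma degree_tsub_add_degree {a b : σ →₀ ℕ} (h : b ≤ a) :
    (a - b).degree + b.degree = a.degree := by
  rw [← map_add, tsub_add_cancel_of_le h]

lemma tsub_add_inf (a b : σ →₀ ℕ) : a - b + a ⊓ b = a := by
  ext x
  simp only [Finsupp.coe_add, Finsupp.coe_tsub, Pi.add_apply, Pi.sub_apply, Finsupp.inf_apply]
  omega

lemma tsub_eq_self_of_disjoint {a b : σ →₀ ℕ} (h : Disjoint a.support b.support) :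
    b - a = b := by
  ext x
  have hx : a x ≠ 0 → b x = 0 := by
    simpa only [Finsupp.mem_support_iff, not_not] using @Finset.disjoint_left.mp h x
  simp only [Finsupp.coe_tsub, Pi.sub_apply]
  grind

lemma single_one_le_iff {i : σ} {a : σ →₀ ℕ} : single i 1 ≤ a ↔ i ∈ a.support := by
  rw [Finsupp.single_le_iff, Finsupp.mem_support_iff, Nat.one_le_iff_ne_zero]

lemma eq_single_one_of_le {i : σ} {a : σ →₀ ℕ} (h0 : a ≠ 0) (h : a ≤ single i 1) :
    a = single i 1 := by
  obtain ⟨j, hj⟩ := Finsupp.support_nonempty_iff.mpr h0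
  have hji : j = i := by simpa using Finsupp.support_mono h hj
  exact le_antisymm h (single_one_le_iff.mpr (hji ▸ hj))

lemma mem_support_single_add_single {i j p : σ} :
    p ∈ (single i 1 + single j 1 : σ →₀ ℕ).support ↔ p = i ∨ p = j := by
  classical
  simp only [Finsupp.mem_support_iff, Finsupp.coe_add, Pi.add_apply, Finsupp.single_apply]
  split_ifs <;> grind

lemma exists_eq_single_add_single {u : σ →₀ ℕ} (h : u.degree = 2) :
    ∃ i j, u = single i 1 + single j 1 := by
  obtain ⟨i, hi⟩ := Finsupp.support_nonempty_iff.mpr (by rintro rfl; simp at h : u ≠ 0)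
  have hle := single_one_le_iff.mpr hi
  have hrest : (u - single i 1).degree = 1 := by
    have := degree_tsub_add_degree hle
    rw [Finsupp.degree_single, h] at this
    omega
  obtain ⟨j, hj⟩ := (Finsupp.sum_eq_one_iff _).mp hrest
  exact ⟨i, j, by rw [add_comm, ← hj, tsub_add_cancel_of_le hle]⟩

lemma single_add_single_tsub {p q : σ} {u : σ →₀ ℕ} (hp : p ∈ u.support)
    (hq : q ∉ u.support) : single p 1 + single q 1 - u = single q 1 := by
  classical
  rw [Finsupp.mem_support_iff] at hp
  rw [Finsupp.notMem_support_iff] at hq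
  ext x
  simp only [Finsupp.coe_tsub, Finsupp.coe_add, Pi.sub_apply, Pi.add_apply, Finsupp.single_apply]
  split_ifs <;> grind

end Finsupp

section MonomialIdeals

variable {K : Type} [Field K] {σ : Type}

lemma support_mon (u : σ →₀ ℕ) : (mon K u).support = {u} := by
  classical
  rw [mon, MvPolynomial.support_monomial, if_neg one_ne_zero]

lemma mem_monIdeal {S : Set (σ →₀ ℕ)} {f : MvPolynomial σ K} :
    f ∈ monIdeal K S ↔ ∀ m ∈ f.support, ∃ s ∈ S, s ≤ m :=
  MvPolynomial.mem_ideal_span_monomial_image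

lemma mon_mem_monIdeal {S : Set (σ →₀ ℕ)} {u : σ →₀ ℕ} :
    mon K u ∈ monIdeal K S ↔ ∃ s ∈ S, s ≤ u := by
  simp [mem_monIdeal, support_mon]

lemma colon_monIdeal (S : Set (σ →₀ ℕ)) (u : σ →₀ ℕ) :
    Submodule.colon (monIdeal K S) (Ideal.span {mon K u}) = monIdeal K ((· - u) '' S) := by
  ext f
  have hsupp : (f * mon K u).support = f.support.map (addRightEmbedding u) :=
    AddMonoidAlgebra.support_coeff_mul_single f _ (by simp) _
  rw [Ideal.mem_colon_span_singleton, mem_monIdeal, mem_monIdeal, hsupp]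
  simp only [Finset.mem_map, addRightEmbedding_apply, forall_exists_index, and_imp,
    forall_apply_eq_imp_iff₂, Set.exists_mem_image, tsub_le_iff_right]

lemma genByVars_monIdeal_iff {T : Set (σ →₀ ℕ)} (h0 : 0 ∉ T) :
    genByVars (monIdeal K T) ↔ ∀ t ∈ T, ∃ i, single i 1 ∈ T ∧ single i 1 ≤ t := by
  constructor
  · rintro ⟨A, hA⟩ t ht
    have ht' : mon K t ∈ monIdeal K T := Ideal.subset_span ⟨t, ht, rfl⟩
    rw [hA, MvPolynomial.mem_ideal_span_X_image] at ht'
    obtain ⟨i, hiA, hti⟩ := ht' t (by simp [support_mon])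
    have hXi : mon K (single i 1) ∈ monIdeal K T := by
      rw [hA]; exact Ideal.subset_span ⟨i, hiA, rfl⟩
    obtain ⟨s, hs, hle⟩ := mon_mem_monIdeal.mp hXi
    obtain rfl := Finsupp.eq_single_one_of_le (by rintro rfl; exact h0 hs) hle
    exact ⟨i, hs, Finsupp.single_one_le_iff.mpr (Finsupp.mem_support_iff.mpr hti)⟩
  · intro h
    refine ⟨{i | single i 1 ∈ T}, le_antisymm ?_ ?_⟩
    · rw [monIdeal, Ideal.span_le]
      rintro _ ⟨t, ht, rfl⟩
      obtain ⟨i, hi, hle⟩ := h t ht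
      rw [SetLike.mem_coe, MvPolynomial.mem_ideal_span_X_image, support_mon]
      intro m hm
      rw [Finset.mem_singleton.mp hm]
      exact ⟨i, hi, Finsupp.mem_support_iff.mp (Finsupp.single_one_le_iff.mp hle)⟩
    · rw [Ideal.span_le]
      rintro _ ⟨i, hi, rfl⟩
      exact Ideal.subset_span ⟨single i 1, hi, rfl⟩

theorem quasiLinear_iff {S : Set (σ →₀ ℕ)} (hmin : IsMinGenSet S) :
    QuasiLinear K S ↔ ∀ u ∈ S, ∀ v ∈ S, v ≠ u →
      ∃ w ∈ S, ∃ i, w - u = single i 1 ∧ single i 1 ≤ v - u := by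
  refine forall₂_congr fun u hu => ?_
  have h0 : 0 ∉ (· - u) '' (S \ {u}) := by
    rintro ⟨v, ⟨hv, hvu⟩, hv0⟩
    exact hvu (hmin v hv u hu (tsub_eq_zero_iff_le.mp hv0))
  rw [colon_monIdeal, genByVars_monIdeal_iff h0]
  simp only [Set.forall_mem_image, Set.mem_sdiff, Set.mem_singleton_iff]
  constructor
  · rintro h v hv hvu
    obtain ⟨i, ⟨w, ⟨hw, -⟩, hwi⟩, hle⟩ := h ⟨hv, hvu⟩
    exact ⟨w, hw, i, hwi, hle⟩
  · rintro h v ⟨hv, hvu⟩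
    obtain ⟨w, hw, i, hwi, hle⟩ := h v hv hvu
    refine ⟨i, ⟨w, ⟨hw, ?_⟩, hwi⟩, hle⟩
    rintro rfl
    exact one_ne_zero (Finsupp.single_eq_zero.mp (tsub_self w ▸ hwi).symm)

end MonomialIdeals

section GapFree

variable {σ : Type}

def GapFree (S : Set (σ →₀ ℕ)) : Prop :=
  ∀ u ∈ S, ∀ v ∈ S, Disjoint u.support v.support →
    ∃ p ∈ u.support, ∃ q ∈ v.support, single p 1 + single q 1 ∈ S

variable {S : Set (σ →₀ ℕ)}

theorem quasiLinear_iff_gapFree (K : Type) [Field K] (hmin : IsMinGenSet S)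
    (hdeg : ∀ v ∈ S, v.degree = 2) : QuasiLinear K S ↔ GapFree S := by
  rw [quasiLinear_iff hmin]
  constructor
  · intro h u hu v hv hdisj
    have hvu : v ≠ u := by
      rintro rfl
      rw [Finset.disjoint_self_iff_empty, Finsupp.support_eq_empty] at hdisj
      simpa [hdisj] using hdeg _ hv
    obtain ⟨w, hw, q, hwq, hq⟩ := h u hu v hv hvu
    rw [Finsupp.tsub_eq_self_of_disjoint hdisj] at hq
    have hinf : (w ⊓ u).degree = 1 := by
      have := congrArg Finsupp.degree (Finsupp.tsub_add_inf w u)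
      rw [map_add, hwq, Finsupp.degree_single, hdeg w hw] at this
      omega
    obtain ⟨p, hp⟩ := (Finsupp.sum_eq_one_iff _).mp hinf
    refine ⟨p, Finsupp.single_one_le_iff.mp (hp ▸ inf_le_right), q,
      Finsupp.single_one_le_iff.mp hq, ?_⟩
    rwa [add_comm, ← hp, ← hwq, Finsupp.tsub_add_inf]
  · intro h u hu v hv hvu
    by_cases hdisj : Disjoint u.support v.support
    · obtain ⟨p, hp, q, hq, hpq⟩ := h u hu v hv hdisj
      refine ⟨_, hpq, q,
        Finsupp.single_add_single_tsub hp (Finset.disjoint_right.mp hdisj hq), ?_⟩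
      rw [Finsupp.tsub_eq_self_of_disjoint hdisj]
      exact Finsupp.single_one_le_iff.mpr hq
    · obtain ⟨p, hpu, hpv⟩ := Finset.not_disjoint_iff.mp hdisj
      -- `v - u` is nonzero by minimality and divides `v / x_p`, of degree one
      have hne : (v - u).degree ≠ 0 := fun h0 =>
        hvu (hmin v hv u hu (tsub_eq_zero_iff_le.mp ((Finsupp.degree_eq_zero_iff _).mp h0)))
      have hle : (v - u).degree ≤ (v - single p 1).degree :=
        Finsupp.degree_mono (tsub_le_tsub_left (Finsupp.single_one_le_iff.mpr hpu) v)
      have hvp := Finsupp.degree_tsub_add_degree (Finsupp.single_one_le_iff.mpr hpv)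
      rw [Finsupp.degree_single, hdeg v hv] at hvp
      obtain ⟨q, hq⟩ := (Finsupp.sum_eq_one_iff _).mp (show (v - u).degree = 1 by omega)
      exact ⟨v, hv, q, hq, hq.ge⟩

end GapFree

section AssocGraph

variable {n : ℕ} {S : Set (Fin n →₀ ℕ)}

-- both `i` and `i̲` lie over the variable `x_i`
def vertexIndex : Fin n ⊕ Fin n → Fin n := Sum.elim id id

lemma eq_inl_of_assocGraph_adj_inr {i : Fin n} {z : Fin n ⊕ Fin n}
    (h : (assocGraph S).Adj (Sum.inr i) z) : z = Sum.inl i := by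
  rcases z with j | j <;> simp_all [assocGraph]

lemma single_add_single_mem_of_adj {a b : Fin n ⊕ Fin n} (h : (assocGraph S).Adj a b) :
    single (vertexIndex a) 1 + single (vertexIndex b) 1 ∈ S := by
  rcases a with i | i <;> rcases b with j | j <;>
    simp only [assocGraph, SimpleGraph.fromRel_adj, ne_eq, false_or, or_false] at h <;>
    simp only [vertexIndex, Sum.elim_inl, Sum.elim_inr, id]
  · obtain ⟨-, ⟨-, h⟩ | ⟨-, h⟩⟩ := h
    · exact h
    · rwa [add_comm]
  · obtain ⟨-, rfl, h⟩ := h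
    rwa [← Finsupp.single_add]
  · obtain ⟨-, rfl, h⟩ := h
    rwa [← Finsupp.single_add]
  · exact h.2.elim

lemma inl_vertexIndex_mem_of_adj {a b : Fin n ⊕ Fin n} (h : (assocGraph S).Adj a b) :
    Sum.inl (vertexIndex a) = a ∨ Sum.inl (vertexIndex a) = b := by
  rcases a with i | i
  · exact Or.inl rfl
  · exact Or.inr (eq_inl_of_assocGraph_adj_inr h).symm

lemma assocGraph_adj_inl_inl {i j : Fin n} (hij : i ≠ j) (h : single i 1 + single j 1 ∈ S) :
    (assocGraph S).Adj (Sum.inl i) (Sum.inl j) := by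
  simp [assocGraph, hij, h]

lemma exists_assocGraph_adj {i j : Fin n} (h : single i 1 + single j 1 ∈ S) :
    ∃ b, vertexIndex b = j ∧ (assocGraph S).Adj (Sum.inl i) b := by
  by_cases hij : i = j
  · subst hij
    refine ⟨Sum.inr i, rfl, ?_⟩
    rw [← Finsupp.single_add] at h
    simpa [assocGraph] using h
  · exact ⟨Sum.inl j, rfl, assocGraph_adj_inl_inl hij h⟩

theorem GapFree.assocGraph_adj_of_adj (h : GapFree S) {a b c d : Fin n ⊕ Fin n}
    (hab : (assocGraph S).Adj a b) (hcd : (assocGraph S).Adj c d)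
    (hac : a ≠ c) (had : a ≠ d) (hbc : b ≠ c) (hbd : b ≠ d) :
    (assocGraph S).Adj a c ∨ (assocGraph S).Adj a d ∨
      (assocGraph S).Adj b c ∨ (assocGraph S).Adj b d := by
  have hover : ∀ {x y : Fin n ⊕ Fin n}, (assocGraph S).Adj x y → ∀ p ∈
      (single (vertexIndex x) 1 + single (vertexIndex y) 1 : Fin n →₀ ℕ).support,
      Sum.inl p = x ∨ Sum.inl p = y := by
    intro x y hxy p hp
    rcases Finsupp.mem_support_single_add_single.mp hp with rfl | rfl
    · exact inl_vertexIndex_mem_of_adj hxy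
    · exact (inl_vertexIndex_mem_of_adj hxy.symm).symm
  have hdisj : Disjoint (single (vertexIndex a) 1 + single (vertexIndex b) 1).support
      (single (vertexIndex c) 1 + single (vertexIndex d) 1 : Fin n →₀ ℕ).support := by
    refine Finset.disjoint_left.mpr fun p hpu hpv => ?_
    rcases hover hab p hpu with rfl | rfl <;> rcases hover hcd p hpv with h2 | h2 <;> simp_all
  obtain ⟨p, hp, q, hq, hpq⟩ :=
    h _ (single_add_single_mem_of_adj hab) _ (single_add_single_mem_of_adj hcd) hdisj
  have hpq' : p ≠ q := by
    rintro rfl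
    exact Finset.disjoint_left.mp hdisj hp hq
  have hadj := assocGraph_adj_inl_inl hpq' hpq
  rcases hover hab p hp with rfl | rfl <;> rcases hover hcd q hq with rfl | rfl <;> simp [hadj]

theorem gapFree_of_indMatEqOne (hdeg : ∀ v ∈ S, v.degree = 2)
    (h : IndMatEqOne (assocGraph S)) : GapFree S := by
  intro u hu v hv hdisj
  by_contra hlink
  have hsep : ∀ x y, vertexIndex x ∈ u.support → vertexIndex y ∈ v.support →
      x ≠ y ∧ ¬ (assocGraph S).Adj x y := by
    refine fun x y hx hy =>
      ⟨?_, fun hxy => hlink ⟨_, hx, _, hy, single_add_single_mem_of_adj hxy⟩⟩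
    rintro rfl
    exact Finset.disjoint_left.mp hdisj hx hy
  obtain ⟨i, j, rfl⟩ := Finsupp.exists_eq_single_add_single (hdeg u hu)
  obtain ⟨k, l, rfl⟩ := Finsupp.exists_eq_single_add_single (hdeg v hv)
  obtain ⟨b, hjb, hib⟩ := exists_assocGraph_adj hu
  obtain ⟨d, hld, hkd⟩ := exists_assocGraph_adj hv
  have hi : vertexIndex (Sum.inl i) ∈ (single i 1 + single j 1).support :=
    Finsupp.mem_support_single_add_single.mpr (Or.inl rfl)
  have hb : vertexIndex b ∈ (single i 1 + single j 1).support :=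
    Finsupp.mem_support_single_add_single.mpr (Or.inr hjb)
  have hk : vertexIndex (Sum.inl k) ∈ (single k 1 + single l 1).support :=
    Finsupp.mem_support_single_add_single.mpr (Or.inl rfl)
  have hd : vertexIndex d ∈ (single k 1 + single l 1).support :=
    Finsupp.mem_support_single_add_single.mpr (Or.inr hld)
  exact h.2 ⟨_, _, _, _, hib, hkd, (hsep _ _ hi hk).1, (hsep _ _ hi hd).1, (hsep _ _ hb hk).1,
    (hsep _ _ hb hd).1, (hsep _ _ hi hk).2, (hsep _ _ hi hd).2, (hsep _ _ hb hk).2,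
    (hsep _ _ hb hd).2⟩

theorem indMatEqOne_assocGraph_iff (hdeg : ∀ v ∈ S, v.degree = 2) :
    IndMatEqOne (assocGraph S) ↔ S.Nonempty ∧ GapFree S := by
  refine ⟨fun h => ⟨?_, gapFree_of_indMatEqOne hdeg h⟩, fun ⟨hne, h⟩ => ⟨?_, ?_⟩⟩
  · obtain ⟨a, b, hab⟩ := h.1
    exact ⟨_, single_add_single_mem_of_adj hab⟩
  · obtain ⟨u, hu⟩ := hne
    obtain ⟨i, j, rfl⟩ := Finsupp.exists_eq_single_add_single (hdeg u hu)
    obtain ⟨b, -, hib⟩ := exists_assocGraph_adj hu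
    exact ⟨_, _, hib⟩
  · rintro ⟨a, b, c, d, hab, hcd, hac, had, hbc, hbd, hnac, hnad, hnbc, hnbd⟩
    rcases h.assocGraph_adj_of_adj hab hcd hac had hbc hbd with h' | h' | h' | h' <;> contradiction

end AssocGraph

/-- Let `I` be a nonzero monomial ideal generated in degree `2`, with
minimal monomial generating set `S`.  Then `I` is quasi-linear if and only if the induced
matching number of the associated graph `G_I` equals `1`. -/
theorem stmt_7 {K : Type} [Field K] {n : ℕ} (S : Set (Fin n →₀ ℕ))
    (hne : S.Nonempty) (hmin : IsMinGenSet S) (hdeg : ∀ v ∈ S, mdeg v = 2) :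
    QuasiLinear K S ↔ IndMatEqOne (assocGraph S) := by
  simp only [mdeg_eq_degree] at hdeg
  rw [quasiLinear_iff_gapFree K hmin hdeg, indMatEqOne_assocGraph_iff hdeg]
  exact (and_iff_right hne).symm
end

section
/- Let n = 2, m = (x,y), d ≥ 2, and u = x^a y^b with a > 0, b > 0, a + b = d. Then the ideal generated by all monomials of degree d other than u is not quasi-linear. -/
open MvPolynomial

/-!
Take `v = x^(a+1) y^(b-1)`, a generator different from `u`. The colon ideal
`(G(I) \ {v}) : v` contains `y²`, because `y² v` is divisible by `x^(a-1) y^(b+1)`.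
It does not contain `y`: the only degree-`d` divisors of `y v = x^(a+1) y^b` are `u` and `v`,
neither of which lies in `G(I) \ {v}`. An ideal generated by variables that contains a power of
`y` contains `y`, so this colon ideal is not generated by variables.
-/

section MonomialIdeal

variable {K : Type} [Field K] {σ : Type}

lemma X_pow_eq_mon (i : σ) (k : ℕ) : (X i ^ k : MvPolynomial σ K) = mon K (Finsupp.single i k) :=
  X_pow_eq_monomial

lemma mon_mem_monIdeal_iff {S : Set (σ →₀ ℕ)} {w : σ →₀ ℕ} :
    mon K w ∈ monIdeal K S ↔ ∃ s ∈ S, s ≤ w := by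
  classical
  change monomial w 1 ∈ Ideal.span ((fun s => monomial s (1 : K)) '' S) ↔ _
  simp [mem_ideal_span_monomial_image, support_monomial]

lemma mon_mem_colon_iff {S : Set (σ →₀ ℕ)} {w v : σ →₀ ℕ} :
    mon K w ∈ (monIdeal K S).colon (Ideal.span {mon K v}) ↔ ∃ s ∈ S, s ≤ w + v := by
  rw [Ideal.mem_colon_span_singleton, mon, mon, monomial_mul, one_mul, ← mon,
    mon_mem_monIdeal_iff]

lemma genByVars.X_mem_of_pow_mem {J : Ideal (MvPolynomial σ K)} (hJ : genByVars J) {i : σ}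
    {k : ℕ} (h : X i ^ k ∈ J) : X i ∈ J := by
  classical
  obtain ⟨A, rfl⟩ := hJ
  rw [X_pow_eq_monomial, mem_ideal_span_X_image] at h
  obtain ⟨j, hjA, hj⟩ := h (Finsupp.single i k) (by simp [support_monomial])
  rw [Finsupp.single_apply_ne_zero] at hj
  exact Ideal.subset_span ⟨j, hjA, by rw [hj.1]⟩

end MonomialIdeal

lemma mdeg_fin_two (t : Fin 2 →₀ ℕ) : mdeg t = t 0 + t 1 := by
  rw [mdeg, Finsupp.sum_fintype _ _ (fun _ => rfl), Fin.sum_univ_two]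

@[simp]
lemma fin_two_finsupp_apply_zero (p q : ℕ) :
    (Finsupp.single 0 p + Finsupp.single 1 q : Fin 2 →₀ ℕ) 0 = p := by
  simp

@[simp]
lemma fin_two_finsupp_apply_one (p q : ℕ) :
    (Finsupp.single 0 p + Finsupp.single 1 q : Fin 2 →₀ ℕ) 1 = q := by
  simp

lemma fin_two_finsupp_eq_iff {t : Fin 2 →₀ ℕ} {p q : ℕ} :
    t = Finsupp.single 0 p + Finsupp.single 1 q ↔ t 0 = p ∧ t 1 = q := by
  simp [Finsupp.ext_iff, Fin.forall_fin_two]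

lemma fin_two_finsupp_le_iff {t : Fin 2 →₀ ℕ} {p q : ℕ} :
    t ≤ Finsupp.single 0 p + Finsupp.single 1 q ↔ t 0 ≤ p ∧ t 1 ≤ q := by
  simp [Finsupp.le_def, Fin.forall_fin_two]

lemma single_one_add_fin_two (k p q : ℕ) :
    Finsupp.single 1 k + (Finsupp.single 0 p + Finsupp.single 1 q : Fin 2 →₀ ℕ) =
      Finsupp.single 0 p + Finsupp.single 1 (q + k) := by
  rw [add_left_comm, ← Finsupp.single_add, add_comm k]

lemma eq_or_eq_of_le_of_mdeg_eq {t : Fin 2 →₀ ℕ} {p q : ℕ}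
    (hle : t ≤ Finsupp.single 0 (p + 1) + Finsupp.single 1 q) (hdeg : mdeg t = p + q) :
    t = Finsupp.single 0 p + Finsupp.single 1 q ∨
      t = Finsupp.single 0 (p + 1) + Finsupp.single 1 (q - 1) := by
  rw [fin_two_finsupp_le_iff] at hle
  rw [mdeg_fin_two] at hdeg
  simp only [fin_two_finsupp_eq_iff]
  omega

/-- Let `n = 2`, `𝔪 = (x, y)`, `d ≥ 2`, and `u = x^a y^b` with
`a > 0`, `b > 0`, `a + b = d`.  Then the ideal generated by all monomials of degree `d`
other than `u` (i.e. by `G(𝔪^d) \ {u}`) is not quasi-linear. -/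
theorem stmt_10 {K : Type} [Field K] {d a b : ℕ}
    (ha : 0 < a) (hb : 0 < b) (hab : a + b = d) :
    ¬ QuasiLinear K
        {v : Fin 2 →₀ ℕ | mdeg v = d ∧ v ≠ Finsupp.single 0 a + Finsupp.single 1 b} := by
  set S := {v : Fin 2 →₀ ℕ | mdeg v = d ∧ v ≠ Finsupp.single 0 a + Finsupp.single 1 b}
  set v : Fin 2 →₀ ℕ := Finsupp.single 0 (a + 1) + Finsupp.single 1 (b - 1) with hv
  have hvS : v ∈ S := by
    simp only [S, hv, Set.mem_ofPred_eq, mdeg_fin_two, ne_eq, fin_two_finsupp_eq_iff,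
      fin_two_finsupp_apply_zero, fin_two_finsupp_apply_one]
    omega
  intro hql
  have hy2 : X 1 ^ 2 ∈ (monIdeal K (S \ {v})).colon (Ideal.span {mon K v}) := by
    rw [X_pow_eq_mon, mon_mem_colon_iff, hv, single_one_add_fin_two]
    refine ⟨Finsupp.single 0 (a - 1) + Finsupp.single 1 (b + 1), ⟨⟨?_, ?_⟩, ?_⟩, ?_⟩ <;>
      simp only [Set.mem_singleton_iff, mdeg_fin_two, ne_eq, fin_two_finsupp_eq_iff,
        fin_two_finsupp_le_iff, fin_two_finsupp_apply_zero, fin_two_finsupp_apply_one] <;>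
      omega
  have hy := (hql v hvS).X_mem_of_pow_mem hy2
  rw [← pow_one (X 1), X_pow_eq_mon, mon_mem_colon_iff, hv, single_one_add_fin_two,
    Nat.sub_add_cancel hb] at hy
  obtain ⟨t, ⟨⟨htd, htu⟩, htv⟩, hle⟩ := hy
  rcases eq_or_eq_of_le_of_mdeg_eq hle (htd.trans hab.symm) with rfl | rfl
  exacts [htu rfl, htv rfl]
end
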